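/- Let n ≥ 1 and d ≥ 2 be integers, let W ≥ 0, and let A₁, …, Aₙ be symmetric real d×d matrices such that for each i, every row of Aᵢ has ℓ₁-norm at most W (equivalently ‖Aᵢ‖_{1→1} ≤ W). Then E_{σ} ‖ Σ_{i=1}^n σᵢ Aᵢ ‖_{∞→1} ≤ 10 · d · √(log d) · √n · W, where σ is uniform on {−1,1}ⁿ. -/

import Mathlib

/-!
For `u, v` in the unit cube, Cauchy–Schwarz gives `(uᵀMv)² ≤ d ‖Mv‖²`, and for symmetric `M` the
inequality `‖Mv‖⁴ = ⟪v, M²v⟫² ≤ ‖v‖² ‖M²v‖²` lets one square `M` repeatedly; ending with the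
Frobenius bound, `‖M‖_{∞→1}^{2p} ≤ d^{2p} tr M^{2p}` whenever `p` is a power of two.
Expanding `tr (∑ σᵢ Aᵢ)^{2p}` into words in the `Aᵢ`, every word has trace at most `d W^{2p}`
(maximal row sums of absolute values are submultiplicative) and a nonnegative sign average, so
`𝔼 tr (∑ σᵢ Aᵢ)^{2p} ≤ d W^{2p} 𝔼 (∑ σᵢ)^{2p}`. This scalar moment is at most `2 (2e p n)^p`,
by comparison with `𝔼 cosh (t ∑ σᵢ) = cosh t ^ n ≤ e^{n t²/2}`. Choosing `log d ≤ p ≤ 2 log d`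
and applying Jensen's inequality to `x ↦ x^{2p}` gives the bound.
-/

/-- `‖M‖_{∞→1} = max { uᵀ M v : ‖u‖_∞ ≤ 1, ‖v‖_∞ ≤ 1 }`. -/
noncomputable def normInfToOne {ι : Type*} [Fintype ι] (M : Matrix ι ι ℝ) : ℝ :=
  sSup {c : ℝ | ∃ u v : ι → ℝ, (∀ a, |u a| ≤ 1) ∧ (∀ a, |v a| ≤ 1) ∧
    c = ∑ a, ∑ b, u a * M a b * v b}

open Finset Matrix

lemma isSymm_sum {ι κ : Type*} {s : Finset κ} {A : κ → Matrix ι ι ℝ}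
    (hA : ∀ i ∈ s, (A i).IsSymm) : (∑ i ∈ s, A i).IsSymm :=
  sum_induction _ IsSymm (fun _ _ => IsSymm.add) isSymm_zero hA

section Bilinear

variable {ι : Type*} [Fintype ι]

lemma sum_sum_mul_mul_eq_dotProduct_mulVec (M : Matrix ι ι ℝ) (u v : ι → ℝ) :
    ∑ a, ∑ b, u a * M a b * v b = u ⬝ᵥ (M *ᵥ v) := by
  simp only [dotProduct, mulVec, mul_sum, mul_assoc]

lemma normInfToOne_nonneg (M : Matrix ι ι ℝ) : 0 ≤ normInfToOne M := by
  refine le_csSup ⟨∑ a, ∑ b, |M a b|, ?_⟩ ⟨0, 0, by simp, by simp, by simp⟩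
  rintro _ ⟨u, v, hu, hv, rfl⟩
  refine sum_le_sum fun a _ => sum_le_sum fun b _ => (le_abs_self _).trans ?_
  rw [abs_mul, abs_mul]
  calc |u a| * |M a b| * |v b| ≤ 1 * |M a b| * 1 := by gcongr <;> simp [hu, hv]
    _ = |M a b| := by ring

lemma normInfToOne_pow_le {M : Matrix ι ι ℝ} {m : ℕ} (hm : Even m) (hm0 : m ≠ 0) {C : ℝ}
    (h : ∀ u v : ι → ℝ, (∀ a, |u a| ≤ 1) → (∀ a, |v a| ≤ 1) → (u ⬝ᵥ (M *ᵥ v)) ^ m ≤ C) :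
    normInfToOne M ^ m ≤ C := by
  have hC : 0 ≤ C := by simpa [hm0] using h 0 0 (by simp) (by simp)
  have hle : normInfToOne M ≤ C ^ (m⁻¹ : ℝ) := by
    refine csSup_le ⟨0, 0, 0, by simp, by simp, by simp⟩ ?_
    rintro _ ⟨u, v, hu, hv, rfl⟩
    rw [sum_sum_mul_mul_eq_dotProduct_mulVec]
    refine (le_abs_self _).trans (le_of_pow_le_pow_left₀ hm0 (by positivity) ?_)
    rw [hm.pow_abs, Real.rpow_inv_natCast_pow hC hm0]
    exact h u v hu hv
  calc normInfToOne M ^ m ≤ (C ^ (m⁻¹ : ℝ)) ^ m := by gcongr; exact normInfToOne_nonneg M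
    _ = C := Real.rpow_inv_natCast_pow hC hm0

lemma sq_dotProduct_le (u v : ι → ℝ) : (u ⬝ᵥ v) ^ 2 ≤ (u ⬝ᵥ u) * (v ⬝ᵥ v) := by
  simpa only [dotProduct, sq] using sum_mul_sq_le_sq_mul_sq univ u v

lemma dotProduct_self_le_card {u : ι → ℝ} (hu : ∀ a, |u a| ≤ 1) : u ⬝ᵥ u ≤ Fintype.card ι := by
  calc u ⬝ᵥ u ≤ ∑ _a : ι, (1 : ℝ) :=
        sum_le_sum fun a _ => abs_le_one_iff_mul_self_le_one.mp (hu a)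
    _ = Fintype.card ι := by simp

lemma mulVec_dotProduct_of_isSymm {M : Matrix ι ι ℝ} (hM : M.IsSymm) (v w : ι → ℝ) :
    (M *ᵥ v) ⬝ᵥ w = v ⬝ᵥ (M *ᵥ w) := by
  rw [dotProduct_mulVec, ← vecMul_transpose, hM.eq]

lemma trace_mul_transpose (M : Matrix ι ι ℝ) : trace (M * Mᵀ) = ∑ a, M a ⬝ᵥ M a := by
  simp only [trace, Matrix.diag, mul_apply, transpose_apply, dotProduct]

lemma trace_mul_transpose_nonneg (M : Matrix ι ι ℝ) : 0 ≤ trace (M * Mᵀ) := by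
  rw [trace_mul_transpose]
  exact sum_nonneg fun a _ => sum_nonneg fun b _ => mul_self_nonneg _

lemma mulVec_dotProduct_self_le (M : Matrix ι ι ℝ) (v : ι → ℝ) :
    (M *ᵥ v) ⬝ᵥ (M *ᵥ v) ≤ (v ⬝ᵥ v) * trace (M * Mᵀ) := by
  rw [trace_mul_transpose, mul_sum]
  refine sum_le_sum fun a _ => ?_
  rw [← sq, mul_comm (v ⬝ᵥ v)]
  exact sq_dotProduct_le (M a) v

lemma dotProduct_self_nonneg (v : ι → ℝ) : 0 ≤ v ⬝ᵥ v := by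
  simpa using dotProduct_star_self_nonneg v

variable [DecidableEq ι]

lemma trace_pow_two_pow_succ_nonneg {M : Matrix ι ι ℝ} (hM : M.IsSymm) (k : ℕ) :
    0 ≤ trace (M ^ 2 ^ (k + 1)) := by
  rw [pow_succ, pow_mul, sq]
  nth_rewrite 2 [← (hM.pow (2 ^ k)).eq]
  exact trace_mul_transpose_nonneg _

lemma mulVec_dotProduct_self_pow_le {M : Matrix ι ι ℝ} (hM : M.IsSymm) (k : ℕ) (v : ι → ℝ) :
    ((M *ᵥ v) ⬝ᵥ (M *ᵥ v)) ^ 2 ^ k ≤ (v ⬝ᵥ v) ^ 2 ^ k * trace (M ^ 2 ^ (k + 1)) := by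
  induction k generalizing M with
  | zero => simpa [sq, hM.eq] using mulVec_dotProduct_self_le M v
  | succ k ih =>
    have hsq : ((M *ᵥ v) ⬝ᵥ (M *ᵥ v)) ^ 2 ≤ (v ⬝ᵥ v) * (((M * M) *ᵥ v) ⬝ᵥ ((M * M) *ᵥ v)) := by
      rw [mulVec_dotProduct_of_isSymm hM, mulVec_mulVec]
      exact sq_dotProduct_le v _
    have hMM : (M * M).IsSymm := by simpa [sq] using hM.pow 2
    calc ((M *ᵥ v) ⬝ᵥ (M *ᵥ v)) ^ 2 ^ (k + 1)
        = (((M *ᵥ v) ⬝ᵥ (M *ᵥ v)) ^ 2) ^ 2 ^ k := by rw [pow_succ', pow_mul]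
      _ ≤ ((v ⬝ᵥ v) * (((M * M) *ᵥ v) ⬝ᵥ ((M * M) *ᵥ v))) ^ 2 ^ k := by
          gcongr
      _ = (v ⬝ᵥ v) ^ 2 ^ k * (((M * M) *ᵥ v) ⬝ᵥ ((M * M) *ᵥ v)) ^ 2 ^ k := mul_pow _ _ _
      _ ≤ (v ⬝ᵥ v) ^ 2 ^ k * ((v ⬝ᵥ v) ^ 2 ^ k * trace ((M * M) ^ 2 ^ (k + 1))) := by
          gcongr
          · exact pow_nonneg (dotProduct_self_nonneg v) _
          · exact ih hMM
      _ = (v ⬝ᵥ v) ^ 2 ^ (k + 1) * trace (M ^ 2 ^ (k + 1 + 1)) := by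
          rw [← mul_assoc, ← pow_add, ← sq M, ← pow_mul]
          ring_nf

lemma dotProduct_mulVec_pow_le {M : Matrix ι ι ℝ} (hM : M.IsSymm) (k : ℕ) {u v : ι → ℝ}
    (hu : ∀ a, |u a| ≤ 1) (hv : ∀ a, |v a| ≤ 1) :
    (u ⬝ᵥ (M *ᵥ v)) ^ 2 ^ (k + 1) ≤
      (Fintype.card ι : ℝ) ^ 2 ^ (k + 1) * trace (M ^ 2 ^ (k + 1)) := by
  calc (u ⬝ᵥ (M *ᵥ v)) ^ 2 ^ (k + 1) = ((u ⬝ᵥ (M *ᵥ v)) ^ 2) ^ 2 ^ k := by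
        rw [pow_succ', pow_mul]
    _ ≤ (Fintype.card ι * ((M *ᵥ v) ⬝ᵥ (M *ᵥ v))) ^ 2 ^ k := by
        gcongr
        exact (sq_dotProduct_le _ _).trans
            (mul_le_mul_of_nonneg_right (dotProduct_self_le_card hu) (dotProduct_self_nonneg _))
    _ = (Fintype.card ι : ℝ) ^ 2 ^ k * ((M *ᵥ v) ⬝ᵥ (M *ᵥ v)) ^ 2 ^ k := mul_pow _ _ _
    _ ≤ (Fintype.card ι : ℝ) ^ 2 ^ k * ((v ⬝ᵥ v) ^ 2 ^ k * trace (M ^ 2 ^ (k + 1))) := by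
        gcongr
        exact mulVec_dotProduct_self_pow_le hM k v
    _ ≤ (Fintype.card ι : ℝ) ^ 2 ^ k *
          ((Fintype.card ι : ℝ) ^ 2 ^ k * trace (M ^ 2 ^ (k + 1))) := by
        have := trace_pow_two_pow_succ_nonneg hM k
        gcongr
        · exact dotProduct_self_nonneg v
        · exact dotProduct_self_le_card hv
    _ = (Fintype.card ι : ℝ) ^ 2 ^ (k + 1) * trace (M ^ 2 ^ (k + 1)) := by
        rw [← mul_assoc, ← pow_add, ← two_mul, ← pow_succ']

lemma normInfToOne_pow_le_trace {M : Matrix ι ι ℝ} (hM : M.IsSymm) (k : ℕ) :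
    normInfToOne M ^ 2 ^ (k + 1) ≤
      (Fintype.card ι : ℝ) ^ 2 ^ (k + 1) * trace (M ^ 2 ^ (k + 1)) :=
  normInfToOne_pow_le ((Nat.even_pow' k.succ_ne_zero).mpr even_two) (by positivity)
    fun _ _ hu hv => dotProduct_mulVec_pow_le hM k hu hv

end Bilinear

lemma sum_smul_pow {R A ι : Type*} [CommSemiring R] [Semiring A] [Algebra R A] [Fintype ι]
    (c : ι → R) (B : ι → A) (m : ℕ) :
    (∑ i, c i • B i) ^ m =
      ∑ f : Fin m → ι, (∏ j, c (f j)) • (List.ofFn fun j => B (f j)).prod := by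
  induction m with
  | zero => simp
  | succ m ih =>
    rw [pow_succ', ih, sum_mul_sum, ← (Fin.consEquiv fun _ => ι).sum_comp, Fintype.sum_prod_type]
    refine sum_congr rfl fun i _ => sum_congr rfl fun f _ => ?_
    simp [Fin.consEquiv, Fin.prod_univ_succ, List.ofFn_succ, smul_smul, mul_comm]

def boolSign (b : Bool) : ℝ := if b then 1 else -1

section Rademacher

variable {κ : Type*} [Fintype κ] [DecidableEq κ]

lemma sum_prod_boolSign_nonneg {μ : Type*} [Fintype μ] (f : μ → κ) :
    0 ≤ ∑ σ : κ → Bool, ∏ j, boolSign (σ (f j)) := by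
  have hfiber (σ : κ → Bool) :
      ∏ j, boolSign (σ (f j)) = ∏ i, boolSign (σ i) ^ #{j | f j = i} := by
    rw [← prod_fiberwise' univ f fun i => boolSign (σ i)]
    exact prod_congr rfl fun i _ => prod_const _
  simp_rw [hfiber]
  rw [← Fintype.prod_sum fun i b => boolSign b ^ #{j | f j = i}]
  refine prod_nonneg fun i _ => ?_
  rcases neg_one_pow_eq_or ℝ #{j | f j = i} with h | h <;> simp [boolSign, h]

lemma sum_exp_mul_sum_boolSign (t : ℝ) :
    ∑ σ : κ → Bool, Real.exp (t * ∑ i, boolSign (σ i)) = (2 * Real.cosh t) ^ Fintype.card κ := by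
  simp_rw [mul_sum, Real.exp_sum]
  rw [← Fintype.prod_sum fun _ b => Real.exp (t * boolSign b)]
  simp [boolSign, Real.cosh_eq, mul_div_cancel₀]

lemma sum_cosh_mul_sum_boolSign (t : ℝ) :
    ∑ σ : κ → Bool, Real.cosh (t * ∑ i, boolSign (σ i)) = (2 * Real.cosh t) ^ Fintype.card κ := by
  have hneg := sum_exp_mul_sum_boolSign (κ := κ) (-t)
  rw [Real.cosh_neg] at hneg
  simp_rw [Real.cosh_eq, ← sum_div, sum_add_distrib, ← neg_mul, hneg, sum_exp_mul_sum_boolSign]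
  rw [← Real.cosh_eq]
  ring

lemma pow_two_mul_le_factorial_mul_cosh (x : ℝ) (p : ℕ) :
    x ^ (2 * p) ≤ (2 * p).factorial * (2 * Real.cosh x) := by
  calc x ^ (2 * p) = |x| ^ (2 * p) := ((even_two_mul p).pow_abs x).symm
    _ ≤ (2 * p).factorial * Real.exp |x| := by
        rw [← div_le_iff₀' (by positivity)]
        exact Real.pow_div_factorial_le_exp _ (abs_nonneg x) _
    _ ≤ (2 * p).factorial * (2 * Real.cosh x) := by
        gcongr
        rw [Real.cosh_eq]
        linarith [Real.exp_abs_le x]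

lemma sum_sum_boolSign_pow_le [Nonempty κ] {p : ℕ} (hp : 0 < p) :
    ∑ σ : κ → Bool, (∑ i, boolSign (σ i)) ^ (2 * p) ≤
      2 ^ Fintype.card κ * (2 * (2 * Real.exp 1 * p * Fintype.card κ) ^ p) := by
  have hn : (0 : ℝ) < Fintype.card κ := by exact_mod_cast Fintype.card_pos
  -- `t² = 2p/n` balances the factor `t^(-2p)` against the bound `e^(n t²/2)` on `𝔼 cosh (t ∑ σᵢ)`
  set t := √(2 * p / Fintype.card κ)
  have ht2 : t ^ 2 = 2 * p / Fintype.card κ := Real.sq_sqrt (by positivity)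
  have ht : 0 < t := Real.sqrt_pos.mpr (by positivity)
  have hcosh : (2 * Real.cosh t) ^ Fintype.card κ ≤ 2 ^ Fintype.card κ * Real.exp p := by
    calc (2 * Real.cosh t) ^ Fintype.card κ ≤ (2 * Real.exp (t ^ 2 / 2)) ^ Fintype.card κ := by
          gcongr
          exact Real.cosh_le_exp_half_sq t
      _ = 2 ^ Fintype.card κ * Real.exp p := by
          rw [mul_pow, ← Real.exp_nat_mul, ht2]
          field_simp
  have hmgf : t ^ (2 * p) * ∑ σ : κ → Bool, (∑ i, boolSign (σ i)) ^ (2 * p) ≤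
      (2 * p).factorial * (2 * (2 * Real.cosh t) ^ Fintype.card κ) := by
    calc t ^ (2 * p) * ∑ σ : κ → Bool, (∑ i, boolSign (σ i)) ^ (2 * p)
        = ∑ σ : κ → Bool, (t * ∑ i, boolSign (σ i)) ^ (2 * p) := by
          rw [mul_sum]
          simp_rw [mul_pow]
      _ ≤ ∑ σ : κ → Bool, (2 * p).factorial * (2 * Real.cosh (t * ∑ i, boolSign (σ i))) :=
          sum_le_sum fun σ _ => pow_two_mul_le_factorial_mul_cosh _ p
      _ = (2 * p).factorial * (2 * (2 * Real.cosh t) ^ Fintype.card κ) := by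
          rw [← mul_sum, ← mul_sum, sum_cosh_mul_sum_boolSign]
  refine le_of_mul_le_mul_left ?_ (pow_pos ht (2 * p))
  calc t ^ (2 * p) * ∑ σ : κ → Bool, (∑ i, boolSign (σ i)) ^ (2 * p)
      ≤ (2 * p).factorial * (2 * (2 * Real.cosh t) ^ Fintype.card κ) := hmgf
    _ ≤ (2 * p : ℝ) ^ (2 * p) * (2 * (2 ^ Fintype.card κ * Real.exp p)) := by
        gcongr
        exact_mod_cast Nat.factorial_le_pow _
    _ = t ^ (2 * p) * (2 ^ Fintype.card κ * (2 * (2 * Real.exp 1 * p * Fintype.card κ) ^ p)) := by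
        rw [pow_mul t, ht2, div_pow, ← Real.exp_one_pow]
        field_simp
        ring

end Rademacher

section WordTrace

attribute [local instance] Matrix.linftyOpNormedRing

variable {ι : Type*} [Fintype ι] [DecidableEq ι]

lemma linfty_opNorm_le_of_sum_abs_le {A : Matrix ι ι ℝ} {W : ℝ} (hW : 0 ≤ W)
    (h : ∀ a, ∑ b, |A a b| ≤ W) : ‖A‖ ≤ W := by
  rw [linfty_opNorm_def, ← NNReal.coe_mk W hW, NNReal.coe_le_coe]
  refine Finset.sup_le fun a _ => ?_
  rw [← NNReal.coe_le_coe, NNReal.coe_sum]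
  simpa using h a

lemma abs_trace_le_card_mul_linfty_opNorm (B : Matrix ι ι ℝ) :
    |trace B| ≤ Fintype.card ι * ‖B‖ := by
  have hentry (a : ι) : |B a a| ≤ ‖B‖ := by
    calc |B a a| ≤ ∑ b, |B a b| := single_le_sum (fun b _ => abs_nonneg (B a b)) (mem_univ a)
      _ ≤ ‖B‖ := by
        have := le_sup (f := fun i => ∑ j, ‖B i j‖₊) (mem_univ a)
        rw [← NNReal.coe_le_coe, NNReal.coe_sum, ← linfty_opNorm_def] at this
        simpa using this
  calc |trace B| ≤ ∑ a, |B a a| := abs_sum_le_sum_abs _ _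
    _ ≤ ∑ _a : ι, ‖B‖ := sum_le_sum fun a _ => hentry a
    _ = Fintype.card ι * ‖B‖ := by simp

lemma norm_list_prod_ofFn_le [Nonempty ι] {m : ℕ} (B : Fin m → Matrix ι ι ℝ) {W : ℝ}
    (hB : ∀ j, ‖B j‖ ≤ W) : ‖(List.ofFn B).prod‖ ≤ W ^ m := by
  calc ‖(List.ofFn B).prod‖ ≤ ((List.ofFn B).map norm).prod := List.norm_prod_le _
    _ = ∏ j, ‖B j‖ := by rw [List.map_ofFn, List.prod_ofFn]; rfl
    _ ≤ ∏ _j : Fin m, W := prod_le_prod (fun j _ => norm_nonneg _) fun j _ => hB j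
    _ = W ^ m := by simp

lemma sum_trace_pow_le [Nonempty ι] {κ : Type*} [Fintype κ] [DecidableEq κ]
    (A : κ → Matrix ι ι ℝ) {W : ℝ} (hW : 0 ≤ W) (hrow : ∀ i a, ∑ b, |A i a b| ≤ W) (m : ℕ) :
    ∑ σ : κ → Bool, trace ((∑ i, boolSign (σ i) • A i) ^ m) ≤
      Fintype.card ι * W ^ m * ∑ σ : κ → Bool, (∑ i, boolSign (σ i)) ^ m := by
  have hword (f : Fin m → κ) :
      trace (List.ofFn fun j => A (f j)).prod ≤ Fintype.card ι * W ^ m :=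
    (le_abs_self _).trans <| (abs_trace_le_card_mul_linfty_opNorm _).trans <| by
      gcongr
      exact norm_list_prod_ofFn_le _ fun j => linfty_opNorm_le_of_sum_abs_le hW (hrow (f j))
  calc ∑ σ : κ → Bool, trace ((∑ i, boolSign (σ i) • A i) ^ m)
      = ∑ f : Fin m → κ, (∑ σ : κ → Bool, ∏ j, boolSign (σ (f j))) *
          trace (List.ofFn fun j => A (f j)).prod := by
        simp_rw [sum_smul_pow, trace_sum, trace_smul, smul_eq_mul, sum_mul]
        exact sum_comm
    _ ≤ ∑ f : Fin m → κ, (∑ σ : κ → Bool, ∏ j, boolSign (σ (f j))) * (Fintype.card ι * W ^ m) :=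
        sum_le_sum fun f _ => mul_le_mul_of_nonneg_left (hword f) (sum_prod_boolSign_nonneg f)
    _ = Fintype.card ι * W ^ m * ∑ σ : κ → Bool, (∑ i, boolSign (σ i)) ^ m := by
        simp_rw [← sum_mul, Fintype.sum_pow]
        rw [sum_comm, mul_comm]

end WordTrace

lemma sum_normInfToOne_pow_le {ι κ : Type*} [Fintype ι] [DecidableEq ι] [Nonempty ι]
    [Fintype κ] [DecidableEq κ] [Nonempty κ] (A : κ → Matrix ι ι ℝ) (hsymm : ∀ i, (A i).IsSymm)
    {W : ℝ} (hW : 0 ≤ W) (hrow : ∀ i a, ∑ b, |A i a b| ≤ W) (k : ℕ) :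
    ∑ σ : κ → Bool, normInfToOne (∑ i, boolSign (σ i) • A i) ^ (2 * 2 ^ k) ≤
      2 ^ Fintype.card κ * ((Fintype.card ι * W) ^ (2 * 2 ^ k) *
        (Fintype.card ι * (2 * (2 * Real.exp 1 * (2 ^ k : ℕ) * Fintype.card κ) ^ 2 ^ k))) := by
  calc ∑ σ : κ → Bool, normInfToOne (∑ i, boolSign (σ i) • A i) ^ (2 * 2 ^ k)
      ≤ ∑ σ : κ → Bool, (Fintype.card ι : ℝ) ^ (2 * 2 ^ k) *
          trace ((∑ i, boolSign (σ i) • A i) ^ (2 * 2 ^ k)) := by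
        gcongr with σ
        rw [← pow_succ']
        exact normInfToOne_pow_le_trace (isSymm_sum fun i _ => (hsymm i).smul _) k
    _ ≤ (Fintype.card ι : ℝ) ^ (2 * 2 ^ k) * (Fintype.card ι * W ^ (2 * 2 ^ k) *
          ∑ σ : κ → Bool, (∑ i, boolSign (σ i)) ^ (2 * 2 ^ k)) := by
        rw [← mul_sum]
        gcongr
        exact sum_trace_pow_le A hW hrow _
    _ ≤ (Fintype.card ι : ℝ) ^ (2 * 2 ^ k) * (Fintype.card ι * W ^ (2 * 2 ^ k) *
          (2 ^ Fintype.card κ *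
            (2 * (2 * Real.exp 1 * (2 ^ k : ℕ) * Fintype.card κ) ^ 2 ^ k))) := by
        gcongr
        exact sum_sum_boolSign_pow_le (by positivity)
    _ = _ := by ring

lemma exists_two_pow_mem_Icc {x : ℝ} (hx : 1 / 2 ≤ x) :
    ∃ k : ℕ, x ≤ ((2 ^ k : ℕ) : ℝ) ∧ ((2 ^ k : ℕ) : ℝ) ≤ 2 * x := by
  classical
  have hex : ∃ k : ℕ, x ≤ 2 ^ k :=
    (pow_unbounded_of_one_lt x one_lt_two).imp fun _ h => h.le
  refine ⟨Nat.find hex, by exact_mod_cast Nat.find_spec hex, ?_⟩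
  rcases Nat.eq_zero_or_pos (Nat.find hex) with h | h
  · rw [h]
    norm_num
    linarith
  · obtain ⟨j, hj⟩ := Nat.exists_eq_add_one_of_ne_zero h.ne'
    have hmin := Nat.find_min hex (show j < Nat.find hex by omega)
    rw [hj, pow_succ]
    push_cast
    linarith [not_le.mp hmin]

lemma mul_moment_le_pow_log {d p : ℕ} {x : ℝ} (hx : 0 ≤ x) (hd : 0 < d) (hp : 1 ≤ p)
    (hdp : Real.log d ≤ p) (hpd : (p : ℝ) ≤ 2 * Real.log d) :
    d * (2 * (2 * Real.exp 1 * p * x) ^ p) ≤ (100 * Real.log d * x) ^ p := by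
  have hde : (d : ℝ) ≤ Real.exp 1 ^ p := by
    rw [Real.exp_one_pow]
    exact (Real.log_le_iff_le_exp (by positivity)).mp hdp
  have h2 : (2 : ℝ) ≤ 2 ^ p := by simpa using pow_le_pow_right₀ one_le_two hp
  have he : Real.exp 1 ^ 2 ≤ 12 := by nlinarith [Real.exp_one_lt_d9, Real.exp_pos 1]
  calc d * (2 * (2 * Real.exp 1 * p * x) ^ p)
      ≤ Real.exp 1 ^ p * (2 ^ p * (2 * Real.exp 1 * p * x) ^ p) := by gcongr
    _ = (4 * Real.exp 1 ^ 2 * p * x) ^ p := by rw [← mul_pow, ← mul_pow]; ring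
    _ ≤ (100 * Real.log d * x) ^ p := by
        have hp0 : (1 : ℝ) ≤ p := by exact_mod_cast hp
        gcongr (?_ * x) ^ p
        nlinarith

/-- Combined estimate: for symmetric `d × d` matrices `A_i` whose rows all have `ℓ₁`-norm
at most `W`, `𝔼_σ ‖∑ σ_i A_i‖_{∞→1} ≤ 10 d √(log d) √n W`. -/
theorem khintchine_infty_one
    (n d : ℕ) (hn : 1 ≤ n) (hd : 2 ≤ d) (W : ℝ) (hW : 0 ≤ W)
    (A : Fin n → Matrix (Fin d) (Fin d) ℝ)
    (hsymm : ∀ i, (A i).IsSymm)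
    (hrow : ∀ i a, ∑ b, |A i a b| ≤ W) :
    (1 / 2 ^ n : ℝ) *
        ∑ σ : Fin n → Bool,
          normInfToOne (∑ i, (if σ i then (1 : ℝ) else -1) • A i) ≤
      10 * (d : ℝ) * Real.sqrt (Real.log d) * Real.sqrt n * W := by
  have : Nonempty (Fin n) := ⟨⟨0, hn⟩⟩
  have : Nonempty (Fin d) := ⟨⟨0, by omega⟩⟩
  have hlog : 1 / 2 ≤ Real.log d := by
    linarith [Real.log_two_gt_d9, Real.log_le_log two_pos (by exact_mod_cast hd : (2 : ℝ) ≤ d)]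
  obtain ⟨k, hdp, hpd⟩ := exists_two_pow_mem_Icc hlog
  have hmoment := sum_normInfToOne_pow_le A hsymm hW hrow k
  set p := 2 ^ k
  simp only [Fintype.card_fin] at hmoment
  refine le_of_pow_le_pow_left₀ (n := 2 * p) (by positivity) (by positivity) ?_
  calc ((1 / 2 ^ n : ℝ) * ∑ σ : Fin n → Bool,
          normInfToOne (∑ i, (if σ i then (1 : ℝ) else -1) • A i)) ^ (2 * p)
      ≤ (1 / 2 ^ n : ℝ) * ∑ σ : Fin n → Bool,
          normInfToOne (∑ i, boolSign (σ i) • A i) ^ (2 * p) := by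
        simp_rw [mul_sum]
        exact Real.pow_arith_mean_le_arith_mean_pow univ _ _ (fun _ _ => by positivity)
          (by simp) (fun σ _ => normInfToOne_nonneg _) _
    _ ≤ ((d : ℝ) * W) ^ (2 * p) * (d * (2 * (2 * Real.exp 1 * p * n) ^ p)) := by
        rw [one_div, inv_mul_le_iff₀ (by positivity)]
        exact hmoment
    _ ≤ ((d : ℝ) * W) ^ (2 * p) * (100 * Real.log d * n) ^ p := by
        gcongr
        exact mul_moment_le_pow_log (by positivity) (by omega) Nat.one_le_two_pow hdp hpd
    _ = (10 * (d : ℝ) * Real.sqrt (Real.log d) * Real.sqrt n * W) ^ (2 * p) := by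
        rw [pow_mul, pow_mul, ← mul_pow]
        congr 1
        rw [mul_pow, mul_pow, mul_pow, mul_pow, Real.sq_sqrt (by linarith),
          Real.sq_sqrt (Nat.cast_nonneg n)]
        ring
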